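/- arXiv:math/0601593 — 2 statements merged into one kernel-verified Lean document; each statement's English description precedes it below -/
import Mathlib

section
/- Let n ≥ 3 and V ∈ L²(ℝⁿ×(0,∞)). Suppose there exist V_j ∈ L²(ℝⁿ×(0,∞)) with V_j → V in L²(ℝⁿ×(0,∞)) and continuous functions f_j on ℝⁿ×(0,∞) with weak Laplacian Δf_j ∈ L²(ℝⁿ×(0,∞)) and weak gradient ∇f_j ∈ L²(ℝⁿ×(0,∞)) such that V_j = Δf_j − |∇f_j|² in the sense of distributions on ℝⁿ×(0,∞), for each j. Then V is form bounded with constant zero: for every smooth compactly supported φ on ℝⁿ×(0,∞), ∫₀^∞∫_{ℝⁿ} V φ² dx dt ≤ ∫₀^∞∫_{ℝⁿ} |∇φ|² dx dt. (Corollary 1(b)) -/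
open MeasureTheory Set Filter

noncomputable section

abbrev Eucl (n : ℕ) := EuclideanSpace ℝ (Fin n)

/-- Spatial partial derivative in the `i`-th coordinate direction. -/
def pd {n : ℕ} (i : Fin n) (f : Eucl n → ℝ) (x : Eucl n) : ℝ :=
  fderiv ℝ f x (EuclideanSpace.single i 1)

/-- Spatial Laplacian. -/
def lap {n : ℕ} (f : Eucl n → ℝ) (x : Eucl n) : ℝ :=
  ∑ i, pd i (pd i f) x

/-- Squared norm of the spatial gradient. -/
def gradSq {n : ℕ} (f : Eucl n → ℝ) (x : Eucl n) : ℝ :=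
  ∑ i, (pd i f x) ^ 2

/-- Lebesgue measure on `ℝⁿ × (0,T)`. -/
def stM (n : ℕ) (T : ℝ) : Measure (Eucl n × ℝ) :=
  volume.restrict (Set.univ ×ˢ Set.Ioo 0 T)

def stMInf (n : ℕ) : Measure (Eucl n × ℝ) :=
  volume.restrict (Set.univ ×ˢ Set.Ioi 0)

/-- Weak solution of `Δu + Vu - ∂ₜu = 0` with initial data `u₀` on `ℝⁿ × (0,T)`. -/
def IsWeakSol (n : ℕ) (T : ℝ) (V u : Eucl n → ℝ → ℝ) (u₀ : Eucl n → ℝ) : Prop :=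
  ∀ φ : Eucl n × ℝ → ℝ, ContDiff ℝ (⊤ : ℕ∞) φ → HasCompactSupport φ →
    (∀ x, φ (x, T) = 0) →
    (∫ x, u₀ x * φ (x, 0)) +
    (∫ p, u p.1 p.2 * deriv (fun s => φ (p.1, s)) p.2 ∂(stM n T)) +
    (∫ p, u p.1 p.2 * lap (fun y => φ (y, p.2)) p.1 ∂(stM n T)) +
    (∫ p, V p.1 p.2 * u p.1 p.2 * φ p ∂(stM n T)) = 0


/-- Test function for distributions on `ℝⁿ × (0,∞)`. -/
def DistTest (n : ℕ) (φ : Eucl n × ℝ → ℝ) : Prop :=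
  ContDiff ℝ (⊤ : ℕ∞) φ ∧ HasCompactSupport φ ∧
    tsupport φ ⊆ Set.univ ×ˢ Set.Ioi 0

section Helpers

variable {n : ℕ}

lemma pd_slice (g : Eucl n × ℝ → ℝ) (hg : ContDiff ℝ (⊤ : ℕ∞) g) (i : Fin n) (x : Eucl n)
    (t : ℝ) : pd i (fun y => g (y, t)) x = fderiv ℝ g (x, t) (EuclideanSpace.single i 1, 0) := by
  have h1 : HasFDerivAt (fun y : Eucl n => (y, t))
      ((ContinuousLinearMap.id ℝ (Eucl n)).prod (0 : Eucl n →L[ℝ] ℝ)) x :=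
    (hasFDerivAt_id x).prodMk (hasFDerivAt_const t x)
  have h2 : HasFDerivAt (fun y : Eucl n => g (y, t))
      ((fderiv ℝ g (x, t)).comp ((ContinuousLinearMap.id ℝ (Eucl n)).prod (0 : Eucl n →L[ℝ] ℝ)))
      x := (((hg.differentiable (by simp)) (x, t)).hasFDerivAt).comp x h1
  rw [pd, h2.fderiv]
  rfl

lemma pdx_smooth (g : Eucl n × ℝ → ℝ) (hg : ContDiff ℝ (⊤ : ℕ∞) g) (w : Eucl n × ℝ) :
    ContDiff ℝ (⊤ : ℕ∞) (fun p : Eucl n × ℝ => fderiv ℝ g p w) :=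
  (hg.fderiv_right (mod_cast le_top)).clm_apply contDiff_const

lemma pdx_support (g : Eucl n × ℝ → ℝ) (w : Eucl n × ℝ) :
    Function.support (fun p : Eucl n × ℝ => fderiv ℝ g p w) ⊆ tsupport g := by
  intro p hp
  refine tsupport_fderiv_subset ℝ (subset_tsupport _ ?_)
  intro h0
  exact hp (by simp [h0])

lemma fderiv_sq (φ : Eucl n × ℝ → ℝ) (hφ : ContDiff ℝ (⊤ : ℕ∞) φ) (p w : Eucl n × ℝ) :
    fderiv ℝ (fun q => φ q ^ 2) p w = 2 * φ p * fderiv ℝ φ p w := by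
  have h := ((hφ.differentiable (by simp)) p).hasFDerivAt
  have h2 : HasFDerivAt (fun q => φ q ^ 2)
      ((φ p • fderiv ℝ φ p) + (φ p • fderiv ℝ φ p)) p := by
    simp only [pow_two]
    exact h.mul h
  rw [h2.fderiv]
  simp [smul_eq_mul]
  ring

lemma integ_helper {S : Set (Eucl n × ℝ)} (hS : IsOpen S) {f h : Eucl n × ℝ → ℝ}
    (hf : ContinuousOn f S) (hh : Continuous h) (hhc : HasCompactSupport h)
    (hhs : tsupport h ⊆ S) :
    Integrable (fun p => f p * h p) (volume.restrict S) := by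
  have hk : Continuous fun p => f p * h p := by
    rw [continuous_iff_continuousAt]
    intro p
    by_cases hp : p ∈ tsupport h
    · exact (hf.continuousAt (hS.mem_nhds (hhs hp))).mul hh.continuousAt
    · have hev : (fun q => f q * h q) =ᶠ[nhds p] fun _ => 0 := by
        filter_upwards [(isClosed_tsupport h).isOpen_compl.mem_nhds hp] with q hq
        simp [image_eq_zero_of_notMem_tsupport hq]
      exact ContinuousAt.congr continuousAt_const hev.symm
  have hkc : HasCompactSupport fun p => f p * h p := hhc.mul_left
  exact (hk.integrable_of_hasCompactSupport hkc).restrict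

lemma L2mul {μ : Measure (Eucl n × ℝ)} {f g : Eucl n × ℝ → ℝ} (hf : MemLp f 2 μ)
    (hg : MemLp g 2 μ) : Integrable (fun p => f p * g p) μ := by
  have h := hg.smul (φ := f) hf (r := 1)
    (hpqr := ⟨by rw [inv_one, ← two_mul, ENNReal.mul_inv_cancel two_ne_zero ENNReal.ofNat_ne_top]⟩)
  rw [memLp_one_iff_integrable] at h
  exact (by simpa [smul_eq_mul] using h : Integrable (f * g) μ)

end Helpers

theorem stmt13 {n : ℕ} (hn : 3 ≤ n) (V : Eucl n → ℝ → ℝ)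
    (hV2 : MemLp (fun p : Eucl n × ℝ => V p.1 p.2) 2 (stMInf n))
    (Vj fj Lj : ℕ → Eucl n → ℝ → ℝ) (Gj : ℕ → Eucl n → ℝ → Fin n → ℝ)
    (hVj2 : ∀ j, MemLp (fun p : Eucl n × ℝ => Vj j p.1 p.2) 2 (stMInf n))
    (hconv : Tendsto (fun j => eLpNorm
        (fun p : Eucl n × ℝ => Vj j p.1 p.2 - V p.1 p.2) 2 (stMInf n))
      atTop (nhds 0))
    (hfcont : ∀ j, ContinuousOn (fun p : Eucl n × ℝ => fj j p.1 p.2)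
      (Set.univ ×ˢ Set.Ioi 0))
    -- `Lj j` is the weak spatial Laplacian of `fj j`, and it lies in `L²`
    (hlapw : ∀ j, ∀ φ : Eucl n × ℝ → ℝ, DistTest n φ →
      ∫ p, fj j p.1 p.2 * lap (fun y => φ (y, p.2)) p.1 ∂(stMInf n)
        = ∫ p, Lj j p.1 p.2 * φ p ∂(stMInf n))
    (hlap2 : ∀ j, MemLp (fun p : Eucl n × ℝ => Lj j p.1 p.2) 2 (stMInf n))
    -- `Gj j` is the weak spatial gradient of `fj j`, and it lies in `L²`
    (hgradw : ∀ j, ∀ φ : Eucl n × ℝ → ℝ, DistTest n φ → ∀ i : Fin n,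
      ∫ p, fj j p.1 p.2 * pd i (fun y => φ (y, p.2)) p.1 ∂(stMInf n)
        = - ∫ p, Gj j p.1 p.2 i * φ p ∂(stMInf n))
    (hgrad2 : ∀ j, MemLp (fun p : Eucl n × ℝ =>
      Real.sqrt (∑ i, (Gj j p.1 p.2 i) ^ 2)) 2 (stMInf n))
    -- `Vj = Δ fj - |∇ fj|²` in the sense of distributions
    (hid : ∀ j, ∀ᵐ p ∂(stMInf n),
      Vj j p.1 p.2 = Lj j p.1 p.2 - ∑ i, (Gj j p.1 p.2 i) ^ 2) :
    ∀ φ : Eucl n × ℝ → ℝ, ContDiff ℝ (⊤ : ℕ∞) φ → HasCompactSupport φ →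
      tsupport φ ⊆ Set.univ ×ˢ Set.Ioi 0 →
      (∫ p, V p.1 p.2 * φ p ^ 2 ∂(stMInf n))
        ≤ ∫ p, gradSq (fun y => φ (y, p.2)) p.1 ∂(stMInf n) := by
  intro φ hφs hφc hφsup
  classical
  set S : Set (Eucl n × ℝ) := Set.univ ×ˢ Set.Ioi 0 with hSdef
  have hSopen : IsOpen S := isOpen_univ.prod isOpen_Ioi
  have hμ : stMInf n = volume.restrict S := rfl
  -- slice derivatives of φ
  set g : Fin n → Eucl n × ℝ → ℝ :=
    fun i p => fderiv ℝ φ p (EuclideanSpace.single i 1, 0) with hgdef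
  have hg_cont : ∀ i, Continuous (g i) := fun i => (pdx_smooth φ hφs _).continuous
  have hg_supp : ∀ i, tsupport (g i) ⊆ tsupport φ := fun i =>
    closure_minimal (pdx_support φ _) (isClosed_tsupport φ)
  have hφslice : ∀ (x : Eucl n) (t : ℝ) (i : Fin n),
      pd i (fun y => φ (y, t)) x = g i (x, t) := fun x t i => pd_slice φ hφs i x t
  -- test functions
  set Φ : Eucl n × ℝ → ℝ := fun p => φ p ^ 2 with hΦdef
  have hΦs : ContDiff ℝ (⊤ : ℕ∞) Φ := hφs.pow 2
  have hΦsupp : tsupport Φ ⊆ tsupport φ := by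
    refine closure_minimal (fun p hp => subset_tsupport φ ?_) (isClosed_tsupport φ)
    intro h0
    exact hp (by simp [hΦdef, h0])
  have hΦc : HasCompactSupport Φ :=
    IsCompact.of_isClosed_subset hφc (isClosed_tsupport Φ) hΦsupp
  have hΦtest : DistTest n Φ := ⟨hΦs, hΦc, hΦsupp.trans hφsup⟩
  set ψ : Fin n → Eucl n × ℝ → ℝ := fun i p => 2 * φ p * g i p with hψdef
  have hψs : ∀ i, ContDiff ℝ (⊤ : ℕ∞) (ψ i) :=
    fun i => (contDiff_const.mul hφs).mul (pdx_smooth φ hφs _)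
  have hψsupp : ∀ i, tsupport (ψ i) ⊆ tsupport φ := by
    intro i
    refine closure_minimal (fun p hp => subset_tsupport φ ?_) (isClosed_tsupport φ)
    intro h0
    exact hp (by simp [hψdef, h0])
  have hψc : ∀ i, HasCompactSupport (ψ i) :=
    fun i => IsCompact.of_isClosed_subset hφc (isClosed_tsupport _) (hψsupp i)
  have hψtest : ∀ i, DistTest n (ψ i) :=
    fun i => ⟨hψs i, hψc i, (hψsupp i).trans hφsup⟩
  have hψeq : ∀ (x : Eucl n) (t : ℝ) (i : Fin n),
      pd i (fun y => Φ (y, t)) x = ψ i (x, t) := by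
    intro x t i
    rw [pd_slice Φ hΦs i x t, hΦdef]
    rw [fderiv_sq φ hφs]
  have hlapeq : ∀ p : Eucl n × ℝ,
      lap (fun y => Φ (y, p.2)) p.1 = ∑ i, pd i (fun y => ψ i (y, p.2)) p.1 := by
    intro p
    unfold lap
    refine Finset.sum_congr rfl fun i _ => ?_
    have h : (pd i fun y => Φ (y, p.2)) = fun y => ψ i (y, p.2) :=
      funext fun y => hψeq y p.2 i
    rw [h]
  -- the right-hand side
  set Q : Eucl n × ℝ → ℝ := fun p => ∑ i, g i p ^ 2 with hQdef
  have hQcont : Continuous Q := continuous_finset_sum _ fun i _ => (hg_cont i).pow 2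
  have hQsupp : tsupport Q ⊆ tsupport φ := by
    refine closure_minimal (fun p hp => ?_) (isClosed_tsupport φ)
    by_contra h0
    refine hp ?_
    have hz : ∀ i, g i p = 0 := by
      intro i
      by_contra hne
      exact h0 (hg_supp i (subset_closure hne))
    simp [hQdef, hz]
  have hQc : HasCompactSupport Q :=
    IsCompact.of_isClosed_subset hφc (isClosed_tsupport _) hQsupp
  have hQint : Integrable Q (stMInf n) := by
    rw [hμ]
    exact (hQcont.integrable_of_hasCompactSupport hQc).restrict
  have hRHS : (∫ p, gradSq (fun y => φ (y, p.2)) p.1 ∂(stMInf n)) = ∫ p, Q p ∂(stMInf n) := by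
    refine integral_congr_ae (Eventually.of_forall fun p => ?_)
    unfold gradSq
    simp only [hQdef]
    exact Finset.sum_congr rfl fun i _ => by rw [hφslice p.1 p.2 i]
  -- Φ is a bounded L² function
  have hΦcont : Continuous Φ := hΦs.continuous
  have hΦmem : MemLp Φ 2 (stMInf n) := by
    rw [hμ]
    exact (hΦcont.memLp_of_hasCompactSupport hΦc).restrict S
  have hΦbdd : ∃ C, ∀ p, ‖Φ p‖ ≤ C := hΦc.exists_bound_of_continuous hΦcont
  have hVΦint : Integrable (fun p => V p.1 p.2 * Φ p) (stMInf n) := L2mul hV2 hΦmem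
  -- the key inequality for each j
  have key : ∀ j, (∫ p, Vj j p.1 p.2 * Φ p ∂(stMInf n)) ≤ ∫ p, Q p ∂(stMInf n) := by
    intro j
    set G2 : Eucl n × ℝ → ℝ := fun p => ∑ i, Gj j p.1 p.2 i ^ 2 with hG2def
    have hG2int : Integrable G2 (stMInf n) := by
      refine ((hgrad2 j).integrable_sq).congr (Eventually.of_forall fun p => ?_)
      simp only [hG2def]
      exact Real.sq_sqrt (Finset.sum_nonneg fun i _ => sq_nonneg _)
    have hG2Φint : Integrable (fun p => G2 p * Φ p) (stMInf n) :=
      (hG2int.bdd_mul hΦcont.aestronglyMeasurable (Eventually.of_forall hΦbdd.choose_spec)).congr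
        (Eventually.of_forall fun p => mul_comm _ _)
    have hLjΦint : Integrable (fun p => Lj j p.1 p.2 * Φ p) (stMInf n) :=
      L2mul (hlap2 j) hΦmem
    have hint_fj : ∀ (h : Eucl n × ℝ → ℝ), Continuous h → tsupport h ⊆ tsupport φ →
        Integrable (fun p => fj j p.1 p.2 * h p) (stMInf n) := by
      intro h hc hsup
      have hcc : HasCompactSupport h :=
        IsCompact.of_isClosed_subset hφc (isClosed_tsupport h) hsup
      rw [hμ]
      exact integ_helper hSopen (hfcont j) hc hcc (hsup.trans hφsup)
    have step1 : (∫ p, Lj j p.1 p.2 * Φ p ∂(stMInf n))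
        = ∑ i, (- ∫ p, Gj j p.1 p.2 i * ψ i p ∂(stMInf n)) := by
      rw [← hlapw j Φ hΦtest]
      have e1 : (∫ p, fj j p.1 p.2 * lap (fun y => Φ (y, p.2)) p.1 ∂(stMInf n))
          = ∫ p, ∑ i, fj j p.1 p.2 * pd i (fun y => ψ i (y, p.2)) p.1 ∂(stMInf n) := by
        refine integral_congr_ae (Eventually.of_forall fun p => ?_)
        simp only [hlapeq p, Finset.mul_sum]
      have hint : ∀ i : Fin n, Integrable
          (fun p => fj j p.1 p.2 * pd i (fun y => ψ i (y, p.2)) p.1) (stMInf n) := by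
        intro i
        refine (hint_fj (fun p => fderiv ℝ (ψ i) p (EuclideanSpace.single i 1, 0))
          (pdx_smooth _ (hψs i) _).continuous
          ((closure_minimal (pdx_support _ _) (isClosed_tsupport _)).trans (hψsupp i))).congr
          (Eventually.of_forall fun p => ?_)
        simp only [pd_slice (ψ i) (hψs i) i p.1 p.2]
      rw [e1, integral_finset_sum _ fun i _ => hint i]
      exact Finset.sum_congr rfl fun i _ => hgradw j (ψ i) (hψtest i) i
    have step2 : (∫ p, Vj j p.1 p.2 * Φ p ∂(stMInf n))
        = (∫ p, Lj j p.1 p.2 * Φ p ∂(stMInf n)) - ∫ p, G2 p * Φ p ∂(stMInf n) := by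
      rw [← integral_sub hLjΦint hG2Φint]
      refine integral_congr_ae ?_
      filter_upwards [hid j] with p hp
      rw [hp]
      simp only [hG2def]
      ring
    set T : Finset (Fin n) := Finset.univ.filter
      (fun i => Integrable (fun p => Gj j p.1 p.2 i * ψ i p) (stMInf n)) with hTdef
    have hsum_eq : ∑ i, (- ∫ p, Gj j p.1 p.2 i * ψ i p ∂(stMInf n))
        = ∑ i ∈ T, (- ∫ p, Gj j p.1 p.2 i * ψ i p ∂(stMInf n)) := by
      refine (Finset.sum_filter_of_ne ?_).symm
      intro i _ hne
      by_contra hni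
      exact hne (by rw [integral_undef hni, neg_zero])
    have hTint : ∀ i ∈ T, Integrable (fun p => Gj j p.1 p.2 i * ψ i p) (stMInf n) :=
      fun i hi => (Finset.mem_filter.mp hi).2
    have hnonneg : 0 ≤ ∫ p,
        ((∑ i ∈ T, Gj j p.1 p.2 i * ψ i p) + G2 p * Φ p + Q p) ∂(stMInf n) := by
      refine integral_nonneg fun p => ?_
      show (0:ℝ) ≤ (∑ i ∈ T, Gj j p.1 p.2 i * ψ i p) + G2 p * Φ p + Q p
      have h1 : (0:ℝ) ≤ ∑ i ∈ T, (Gj j p.1 p.2 i * φ p + g i p) ^ 2 :=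
        Finset.sum_nonneg fun i _ => sq_nonneg _
      have h2 : ∑ i ∈ T, (Gj j p.1 p.2 i * φ p + g i p) ^ 2
          = (∑ i ∈ T, Gj j p.1 p.2 i ^ 2 * φ p ^ 2)
            + ((∑ i ∈ T, Gj j p.1 p.2 i * ψ i p) + ∑ i ∈ T, g i p ^ 2) := by
        rw [← Finset.sum_add_distrib, ← Finset.sum_add_distrib]
        refine Finset.sum_congr rfl fun i _ => ?_
        simp only [hψdef]
        ring
      have h3 : ∑ i ∈ T, Gj j p.1 p.2 i ^ 2 * φ p ^ 2 ≤ G2 p * Φ p := by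
        have hGΦ : G2 p * Φ p = ∑ i, Gj j p.1 p.2 i ^ 2 * φ p ^ 2 := by
          simp only [hG2def, hΦdef]
          rw [Finset.sum_mul]
        rw [hGΦ]
        exact Finset.sum_le_sum_of_subset_of_nonneg (Finset.filter_subset _ _)
          (fun i _ _ => by positivity)
      have h4 : ∑ i ∈ T, g i p ^ 2 ≤ Q p := by
        simp only [hQdef]
        exact Finset.sum_le_sum_of_subset_of_nonneg (Finset.filter_subset _ _)
          (fun i _ _ => by positivity)
      linarith
    have hsplit : (∫ p,
          ((∑ i ∈ T, Gj j p.1 p.2 i * ψ i p) + G2 p * Φ p + Q p) ∂(stMInf n))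
        = (∑ i ∈ T, ∫ p, Gj j p.1 p.2 i * ψ i p ∂(stMInf n))
          + (∫ p, G2 p * Φ p ∂(stMInf n)) + ∫ p, Q p ∂(stMInf n) := by
      have hA : Integrable (fun p => ∑ i ∈ T, Gj j p.1 p.2 i * ψ i p) (stMInf n) :=
        integrable_finset_sum T hTint
      have hAB : Integrable (fun p => (∑ i ∈ T, Gj j p.1 p.2 i * ψ i p) + G2 p * Φ p)
          (stMInf n) := hA.add hG2Φint
      rw [integral_add hAB hQint, integral_add hA hG2Φint, integral_finset_sum T hTint]
    rw [hsplit] at hnonneg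
    have hG2Φnonneg : (0:ℝ) ≤ ∫ p, G2 p * Φ p ∂(stMInf n) := by
      refine integral_nonneg fun p => ?_
      simp only [hG2def, hΦdef]
      positivity
    rw [step2, step1, hsum_eq, Finset.sum_neg_distrib]
    linarith
  -- pass to the limit
  have hHolder : ∀ (f : Eucl n × ℝ → ℝ), MemLp f 2 (stMInf n) →
      |∫ p, f p * Φ p ∂(stMInf n)| ≤ (eLpNorm f 2 (stMInf n)).toReal *
        (eLpNorm Φ 2 (stMInf n)).toReal := by
    intro f hf
    have h1 : (∫ p, f p * Φ p ∂(stMInf n))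
        = @inner ℝ _ _ (hf.toLp f) (hΦmem.toLp Φ) := by
      rw [L2.inner_def]
      refine (integral_congr_ae ?_)
      filter_upwards [hf.coeFn_toLp, hΦmem.coeFn_toLp] with p h1 h2
      rw [h1, h2]
      simp [RCLike.inner_apply]
      ring
    rw [h1]
    refine (abs_real_inner_le_norm _ _).trans ?_
    rw [Lp.norm_toLp, Lp.norm_toLp]
  have haj : Tendsto (fun j => (eLpNorm (fun p : Eucl n × ℝ => Vj j p.1 p.2 - V p.1 p.2) 2
      (stMInf n)).toReal) atTop (nhds 0) := by
    have h := (ENNReal.tendsto_toReal (by simp : (0:ENNReal) ≠ ⊤)).comp hconv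
    simpa [Function.comp_def] using h
  have hbound : ∀ j, (∫ p, V p.1 p.2 * Φ p ∂(stMInf n))
      ≤ (∫ p, Q p ∂(stMInf n)) +
        (eLpNorm (fun p : Eucl n × ℝ => Vj j p.1 p.2 - V p.1 p.2) 2 (stMInf n)).toReal *
          (eLpNorm Φ 2 (stMInf n)).toReal := by
    intro j
    have hVjΦint : Integrable (fun p => Vj j p.1 p.2 * Φ p) (stMInf n) :=
      L2mul (hVj2 j) hΦmem
    have hdiff : (∫ p, (Vj j p.1 p.2 - V p.1 p.2) * Φ p ∂(stMInf n))
        = (∫ p, Vj j p.1 p.2 * Φ p ∂(stMInf n)) - ∫ p, V p.1 p.2 * Φ p ∂(stMInf n) := by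
      rw [← integral_sub hVjΦint hVΦint]
      refine integral_congr_ae (Eventually.of_forall fun p => ?_)
      ring
    have habs : |∫ p, (Vj j p.1 p.2 - V p.1 p.2) * Φ p ∂(stMInf n)|
        ≤ (eLpNorm (fun p : Eucl n × ℝ => Vj j p.1 p.2 - V p.1 p.2) 2 (stMInf n)).toReal *
          (eLpNorm Φ 2 (stMInf n)).toReal := hHolder _ ((hVj2 j).sub hV2)
    have hkey := key j
    have h3 := abs_le.mp habs
    linarith [h3.1, h3.2]
  have htend : Tendsto (fun j => (∫ p, Q p ∂(stMInf n)) +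
      (eLpNorm (fun p : Eucl n × ℝ => Vj j p.1 p.2 - V p.1 p.2) 2 (stMInf n)).toReal *
        (eLpNorm Φ 2 (stMInf n)).toReal) atTop
      (nhds ((∫ p, Q p ∂(stMInf n)) + 0 * (eLpNorm Φ 2 (stMInf n)).toReal)) :=
    tendsto_const_nhds.add (haj.mul_const _)
  have hfinal := ge_of_tendsto' htend hbound
  rw [zero_mul, add_zero] at hfinal
  rw [hRHS]
  exact hfinal
end
end

section
/- Let n ≥ 1, let U ⊆ ℝⁿ×(0,∞) be open, let f : U → ℝ be C² (jointly in space and time), and let φ be a smooth real-valued function compactly supported in U. Then ∫∫_U (Δf − |∇f|²) φ² dx dt ≤ ∫∫_U |∇φ|² dx dt, where Δ and ∇ are taken in the spatial variable only. (Key integration-by-parts inequality used in the proofs of Corollary 1(b) and Corollary 2) -/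
open MeasureTheory Set Filter

noncomputable section

open scoped Manifold

section Gen
variable {E : Type*} [NormedAddCommGroup E] [NormedSpace ℝ E]

def Dv (v : E) (F : E → ℝ) : E → ℝ := fun p => fderiv ℝ F p v

lemma contDiff_Dv {m : ℕ∞} {F : E → ℝ} (hF : ContDiff ℝ (m+1) F) (v : E) :
    ContDiff ℝ m (Dv v F) := by
  have h1 : ContDiff ℝ m (fderiv ℝ F) := hF.fderiv_right le_rfl
  exact (ContinuousLinearMap.apply ℝ ℝ v).contDiff.comp h1

lemma cont_Dv {F : E → ℝ} (hF : ContDiff ℝ 1 F) (v : E) : Continuous (Dv v F) :=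
  (contDiff_Dv (m := 0) (by exact_mod_cast hF) v).continuous

lemma hcs_Dv {F : E → ℝ} (h : HasCompactSupport F) (v : E) :
    HasCompactSupport (Dv v F) := by
  have := (h.fderiv ℝ (f := F))
  exact this.comp_left (g := fun L : E →L[ℝ] ℝ => L v) rfl

variable [MeasurableSpace E] [BorelSpace E] [FiniteDimensional ℝ E]

lemma ibp (μ : Measure E) [μ.IsAddHaarMeasure] {F G : E → ℝ}
    (hF : ContDiff ℝ 1 F) (hFc : HasCompactSupport F)
    (hG : ContDiff ℝ 1 G) (hGc : HasCompactSupport G) (v : E) :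
    ∫ p, Dv v F p * G p ∂μ = - ∫ p, F p * Dv v G p ∂μ := by
  obtain ⟨C, hC⟩ := ContDiff.lipschitzWith_of_hasCompactSupport hFc hF one_ne_zero
  obtain ⟨D, hD⟩ := ContDiff.lipschitzWith_of_hasCompactSupport hGc hG one_ne_zero
  have h := LipschitzWith.integral_lineDeriv_mul_eq (μ := μ) hC hD hGc v
  have e1 : ∀ p : E, lineDeriv ℝ F p v = Dv v F p := fun p =>
    ((hF.differentiable one_ne_zero) p).lineDeriv_eq_fderiv
  have e2 : ∀ p : E, lineDeriv ℝ G p (-v) = - Dv v G p := fun p => by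
    rw [((hG.differentiable one_ne_zero) p).lineDeriv_eq_fderiv]
    simp [Dv]
  simp only [e1, e2] at h
  rw [h, ← integral_neg]
  congr 1; ext p; ring
end Gen

def ev {n : ℕ} (i : Fin n) : Eucl n × ℝ := (EuclideanSpace.single i 1, 0)

lemma pd_eq {n : ℕ} (F : Eucl n × ℝ → ℝ) (x : Eucl n) (t : ℝ)
    (hF : DifferentiableAt ℝ F (x, t)) (i : Fin n) :
    pd i (fun y => F (y, t)) x = Dv (ev i) F (x, t) := by
  have hin : HasFDerivAt (fun y : Eucl n => (y, t))
      ((ContinuousLinearMap.id ℝ (Eucl n)).prod 0) x :=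
    (hasFDerivAt_id x).prodMk (hasFDerivAt_const t x)
  have h := hF.hasFDerivAt.comp x hin
  simp only [Function.comp_def] at h
  rw [pd, h.fderiv]
  simp [Dv, ev]

lemma gradSq_eq {n : ℕ} (F : Eucl n × ℝ → ℝ) (hF : Differentiable ℝ F) (x : Eucl n) (t : ℝ) :
    gradSq (fun y => F (y, t)) x = ∑ i, (Dv (ev i) F (x, t)) ^ 2 := by
  unfold gradSq
  exact Finset.sum_congr rfl fun i _ => by rw [pd_eq F x t (hF _) i]

lemma lap_eq {n : ℕ} (F : Eucl n × ℝ → ℝ) (hF : ContDiff ℝ 2 F) (x : Eucl n) (t : ℝ) :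
    lap (fun y => F (y, t)) x = ∑ i, Dv (ev i) (Dv (ev i) F) (x, t) := by
  have h2 : ContDiff ℝ ((1:ℕ∞)+1) F := by exact_mod_cast hF
  unfold lap
  refine Finset.sum_congr rfl fun i _ => ?_
  have hD : ContDiff ℝ 1 (Dv (ev i) F) := contDiff_Dv h2 (ev i)
  have h1 : (pd i fun y => F (y, t)) = fun y => Dv (ev i) F (y, t) := by
    funext y
    exact pd_eq F y t ((hF.differentiable two_ne_zero) _) i
  rw [h1, pd_eq (Dv (ev i) F) x t ((hD.differentiable one_ne_zero) _) i]

instance haarInst (n : ℕ) : (volume : Measure (Eucl n × ℝ)).IsAddHaarMeasure := by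
  have : (volume : Measure (Eucl n × ℝ)) = (volume : Measure (Eucl n)).prod volume := rfl
  rw [this]; infer_instance

lemma main_ineq {n : ℕ} (F φ : Eucl n × ℝ → ℝ) (hF : ContDiff ℝ 2 F)
    (hFc : HasCompactSupport F) (hφ : ContDiff ℝ (⊤ : ℕ∞) φ) (hφc : HasCompactSupport φ) :
    ∫ p : Eucl n × ℝ, (lap (fun y => F (y, p.2)) p.1 - gradSq (fun y => F (y, p.2)) p.1) * φ p ^ 2
      ≤ ∫ p : Eucl n × ℝ, gradSq (fun y => φ (y, p.2)) p.1 := by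
  have hF2 : ContDiff ℝ ((1:ℕ∞)+1) F := by exact_mod_cast hF
  have hφ1 : ContDiff ℝ 1 φ := hφ.of_le (mod_cast le_top)
  have hφd := hφ1.differentiable one_ne_zero
  set ψ : Eucl n × ℝ → ℝ := fun q => φ q * φ q with hψdef
  have hψ : ContDiff ℝ 1 ψ := hφ1.mul hφ1
  have hψc : HasCompactSupport ψ := hφc.mul_left
  set a : Fin n → (Eucl n × ℝ) → ℝ := fun i => Dv (ev i) F with ha
  set b : Fin n → (Eucl n × ℝ) → ℝ := fun i => Dv (ev i) φ with hb
  have haC : ∀ i, ContDiff ℝ 1 (a i) := fun i => contDiff_Dv hF2 (ev i)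
  have haCc : ∀ i, HasCompactSupport (a i) := fun i => hcs_Dv hFc (ev i)
  have ha'C : ∀ i, Continuous (Dv (ev i) (a i)) := fun i => cont_Dv (haC i) (ev i)
  have ha'Cc : ∀ i, HasCompactSupport (Dv (ev i) (a i)) := fun i => hcs_Dv (haCc i) (ev i)
  have hbC : ∀ i, Continuous (b i) := fun i => cont_Dv hφ1 (ev i)
  have hbCc : ∀ i, HasCompactSupport (b i) := fun i => hcs_Dv hφc (ev i)
  have hDψ : ∀ i p, Dv (ev i) ψ p = 2 * φ p * b i p := by
    intro i p
    have hm : HasFDerivAt ψ (φ p • fderiv ℝ φ p + φ p • fderiv ℝ φ p) p :=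
      (hφd p).hasFDerivAt.mul (hφd p).hasFDerivAt
    show fderiv ℝ ψ p (ev i) = _
    rw [hm.fderiv]
    simp [hb, Dv]; ring
  have int1 : ∀ i, Integrable (fun p => Dv (ev i) (a i) p * ψ p) := fun i =>
    Continuous.integrable_of_hasCompactSupport ((ha'C i).mul hψ.continuous)
      (ha'Cc i).mul_right
  have int2 : ∀ i, Integrable (fun p => (a i p)^2 * ψ p) := fun i =>
    Continuous.integrable_of_hasCompactSupport
      ((((haC i).continuous).pow 2).mul hψ.continuous) hψc.mul_left
  have int3 : ∀ i, Integrable (fun p => a i p * Dv (ev i) ψ p) := fun i =>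
    Continuous.integrable_of_hasCompactSupport
      (((haC i).continuous).mul (cont_Dv hψ (ev i))) (haCc i).mul_right
  have intRi : ∀ i, Integrable (fun p => (b i p)^2) := fun i =>
    Continuous.integrable_of_hasCompactSupport ((hbC i).pow 2)
      ((hbCc i).comp_left (g := fun x : ℝ => x ^ 2) (by simp))
  have intLi : ∀ i, Integrable (fun p => Dv (ev i) (a i) p * ψ p - (a i p)^2 * ψ p) :=
    fun i => (int1 i).sub (int2 i)
  have L1 : ∀ p : Eucl n × ℝ,
      (lap (fun y => F (y, p.2)) p.1 - gradSq (fun y => F (y, p.2)) p.1) * φ p ^ 2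
      = ∑ i, (Dv (ev i) (a i) p * ψ p - (a i p)^2 * ψ p) := by
    intro p
    rw [lap_eq F hF p.1 p.2, gradSq_eq F (hF.differentiable two_ne_zero) p.1 p.2,
      ← Finset.sum_sub_distrib, Finset.sum_mul]
    refine Finset.sum_congr rfl fun i _ => ?_
    simp only [ha, hψdef, Prod.mk.eta] <;> ring
  have R1 : ∀ p : Eucl n × ℝ, gradSq (fun y => φ (y, p.2)) p.1 = ∑ i, (b i p)^2 := by
    intro p
    rw [gradSq_eq φ (hφ.differentiable (by simp)) p.1 p.2]
  calc ∫ p : Eucl n × ℝ,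
        (lap (fun y => F (y, p.2)) p.1 - gradSq (fun y => F (y, p.2)) p.1) * φ p ^ 2
      = ∫ p : Eucl n × ℝ, ∑ i, (Dv (ev i) (a i) p * ψ p - (a i p)^2 * ψ p) := by
        congr 1; funext p; exact L1 p
    _ = ∑ i, ∫ p : Eucl n × ℝ, (Dv (ev i) (a i) p * ψ p - (a i p)^2 * ψ p) :=
        integral_finset_sum _ (fun i _ => intLi i)
    _ ≤ ∑ i, ∫ p : Eucl n × ℝ, (b i p)^2 := by
        refine Finset.sum_le_sum fun i _ => ?_
        have hibp := ibp volume (haC i) (haCc i) hψ hψc (ev i)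
        rw [integral_sub (int1 i) (int2 i), hibp]
        have e : ∀ p : Eucl n × ℝ, (a i p * φ p + b i p)^2
            = (b i p)^2 + a i p * Dv (ev i) ψ p + (a i p)^2 * ψ p := by
          intro p
          rw [hDψ i p]
          simp only [hψdef]
          ring
        have h0 : 0 ≤ ∫ p : Eucl n × ℝ, (a i p * φ p + b i p)^2 :=
          integral_nonneg fun p => sq_nonneg _
        have hsplit : ∫ p : Eucl n × ℝ, (a i p * φ p + b i p)^2
            = (∫ p : Eucl n × ℝ, (b i p)^2) + (∫ p : Eucl n × ℝ, a i p * Dv (ev i) ψ p)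
              + ∫ p : Eucl n × ℝ, (a i p)^2 * ψ p := by
          calc ∫ p : Eucl n × ℝ, (a i p * φ p + b i p)^2
              = ∫ p : Eucl n × ℝ,
                  (((b i p)^2 + a i p * Dv (ev i) ψ p) + (a i p)^2 * ψ p) := by
                congr 1; funext p; rw [e p]
            _ = (∫ p : Eucl n × ℝ, ((b i p)^2 + a i p * Dv (ev i) ψ p))
                  + ∫ p : Eucl n × ℝ, (a i p)^2 * ψ p :=
                integral_add ((intRi i).add (int3 i)) (int2 i)
            _ = (∫ p : Eucl n × ℝ, (b i p)^2) + (∫ p : Eucl n × ℝ, a i p * Dv (ev i) ψ p)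
                  + ∫ p : Eucl n × ℝ, (a i p)^2 * ψ p := by
                rw [integral_add (intRi i) (int3 i)]
        linarith
    _ = ∫ p : Eucl n × ℝ, ∑ i, (b i p)^2 := (integral_finset_sum _ (fun i _ => intRi i)).symm
    _ = ∫ p : Eucl n × ℝ, gradSq (fun y => φ (y, p.2)) p.1 := by
        congr 1; funext p; exact (R1 p).symm


theorem stmt14 {n : ℕ} (hn : 1 ≤ n) (U : Set (Eucl n × ℝ))
    (hUopen : IsOpen U) (hUsub : U ⊆ Set.univ ×ˢ Set.Ioi 0)
    (f : Eucl n × ℝ → ℝ) (hf : ContDiffOn ℝ 2 f U)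
    (φ : Eucl n × ℝ → ℝ) (hφ : ContDiff ℝ (⊤ : ℕ∞) φ)
    (hφsupp : HasCompactSupport φ) (hφU : tsupport φ ⊆ U) :
    (∫ p in U, (lap (fun y => f (y, p.2)) p.1 - gradSq (fun y => f (y, p.2)) p.1)
        * φ p ^ 2)
      ≤ ∫ p in U, gradSq (fun y => φ (y, p.2)) p.1 := by
  obtain ⟨K', hK'c, hKK', hK'U⟩ := exists_compact_between hφsupp hUopen hφU
  obtain ⟨χ, hχ1, hχ0, hχ01⟩ :=
    exists_contMDiffMap_one_nhds_of_subset_interior (𝓘(ℝ, Eucl n × ℝ)) (n := (⊤ : ℕ∞)) (isClosed_tsupport φ) hKK'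
  have hχcd : ContDiff ℝ (⊤ : ℕ∞) χ := χ.contMDiff.contDiff
  obtain ⟨V, hVopen, hKV, hχV⟩ := eventually_nhdsSet_iff_exists.1 hχ1
  set W : Set (Eucl n × ℝ) := V ∩ U with hW
  have hWopen : IsOpen W := hVopen.inter hUopen
  have hKW : tsupport φ ⊆ W := fun p hp => ⟨hKV hp, hφU hp⟩
  set F : Eucl n × ℝ → ℝ := fun p => χ p * f p with hFdef
  have hFc : HasCompactSupport F :=
    HasCompactSupport.intro hK'c (fun p hp => by simp [hFdef, hχ0 p hp])
  have hFsm : ContDiff ℝ 2 F := by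
    rw [contDiff_iff_contDiffAt]
    intro p
    by_cases hp : p ∈ U
    · exact (((hχcd.of_le (by decide)).contDiffAt (n := 2))).mul
        (hf.contDiffAt (hUopen.mem_nhds hp))
    · have hp' : p ∈ (K')ᶜ := fun h => hp (hK'U h)
      refine (contDiffAt_const (c := 0)).congr_of_eventuallyEq ?_
      filter_upwards [hK'c.isClosed.isOpen_compl.mem_nhds hp'] with q hq
      simp [hFdef, hχ0 q hq]
  have hVf : EqOn F f W := fun p hp => by
    simp [hFdef, hχV p hp.1]
  -- pointwise equality of the left integrand
  have hpt : ∀ p : Eucl n × ℝ,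
      (lap (fun y => f (y, p.2)) p.1 - gradSq (fun y => f (y, p.2)) p.1) * φ p ^ 2
      = (lap (fun y => F (y, p.2)) p.1 - gradSq (fun y => F (y, p.2)) p.1) * φ p ^ 2 := by
    intro p
    by_cases hp : p ∈ W
    · set S : Set (Eucl n) := {y : Eucl n | (y, p.2) ∈ W} with hS
      have hSopen : IsOpen S := hWopen.preimage (continuous_id.prodMk continuous_const)
      have hpS : p.1 ∈ S := by simpa [hS] using hp
      have hpd : ∀ (i : Fin n), ∀ y ∈ S,
          pd i (fun z => f (z, p.2)) y = pd i (fun z => F (z, p.2)) y := by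
        intro i y hy
        unfold pd; congr 1
        apply Filter.EventuallyEq.fderiv_eq
        filter_upwards [hSopen.mem_nhds hy] with z hz
        exact (hVf hz).symm
      have hl : lap (fun y => f (y, p.2)) p.1 = lap (fun y => F (y, p.2)) p.1 := by
        unfold lap
        refine Finset.sum_congr rfl fun i _ => ?_
        unfold pd; congr 1
        apply Filter.EventuallyEq.fderiv_eq
        filter_upwards [hSopen.mem_nhds hpS] with y hy
        exact hpd i y hy
      have hg : gradSq (fun y => f (y, p.2)) p.1 = gradSq (fun y => F (y, p.2)) p.1 := by
        unfold gradSq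
        exact Finset.sum_congr rfl fun i _ => by rw [hpd i p.1 hpS]
      rw [hl, hg]
    · have hz : φ p = 0 := image_eq_zero_of_notMem_tsupport (fun h => hp (hKW h))
      rw [hz]; ring
  -- zero off U
  have hzero : ∀ p : Eucl n × ℝ, p ∉ U →
      (lap (fun y => F (y, p.2)) p.1 - gradSq (fun y => F (y, p.2)) p.1) * φ p ^ 2 = 0 := by
    intro p hp
    have hz : φ p = 0 := image_eq_zero_of_notMem_tsupport (fun h => hp (hφU h))
    rw [hz]; ring
  have hzeroR : ∀ p : Eucl n × ℝ, p ∉ U → gradSq (fun y => φ (y, p.2)) p.1 = 0 := by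
    intro p hp
    have hp' : p ∈ (tsupport φ)ᶜ := fun h => hp (hφU h)
    have hSopen : IsOpen {y : Eucl n | (y, p.2) ∈ (tsupport φ)ᶜ} :=
      (isClosed_tsupport φ).isOpen_compl.preimage (continuous_id.prodMk continuous_const)
    have hpS : p.1 ∈ {y : Eucl n | (y, p.2) ∈ (tsupport φ)ᶜ} := by simpa using hp'
    have hpdz : ∀ i : Fin n, pd i (fun y => φ (y, p.2)) p.1 = 0 := by
      intro i
      unfold pd
      have : fderiv ℝ (fun y : Eucl n => φ (y, p.2)) p.1
          = fderiv ℝ (fun _ : Eucl n => (0:ℝ)) p.1 := by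
        apply Filter.EventuallyEq.fderiv_eq
        filter_upwards [hSopen.mem_nhds hpS] with y hy
        exact image_eq_zero_of_notMem_tsupport hy
      rw [this, fderiv_fun_const]
      simp
    unfold gradSq
    exact Finset.sum_eq_zero fun i _ => by rw [hpdz i]; ring
  calc (∫ p in U, (lap (fun y => f (y, p.2)) p.1 - gradSq (fun y => f (y, p.2)) p.1) * φ p ^ 2)
      = ∫ p in U,
          (lap (fun y => F (y, p.2)) p.1 - gradSq (fun y => F (y, p.2)) p.1) * φ p ^ 2 := by
        apply integral_congr_ae
        exact Filter.Eventually.of_forall fun p => hpt p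
    _ = ∫ p : Eucl n × ℝ,
          (lap (fun y => F (y, p.2)) p.1 - gradSq (fun y => F (y, p.2)) p.1) * φ p ^ 2 :=
        setIntegral_eq_integral_of_forall_compl_eq_zero fun p hp => hzero p hp
    _ ≤ ∫ p : Eucl n × ℝ, gradSq (fun y => φ (y, p.2)) p.1 :=
        main_ineq F φ hFsm hFc hφ hφsupp
    _ = ∫ p in U, gradSq (fun y => φ (y, p.2)) p.1 :=
        (setIntegral_eq_integral_of_forall_compl_eq_zero fun p hp => hzeroR p hp).symm
end
end
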